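/- Let N ≥ 1 and let ν : ℝ^N → ℝ be C¹ and S : ℝ^N → ℝ be C². Then every solution x : I → ℝ^N of ẋ = ν(x) ∇S(x) satisfies, for all t ∈ I, ẍ(t) = ∇( ½ ν² ‖∇S‖² )(x(t)) + ⟨ ∇(ν²/2)(x(t)), ∇S(x(t)) ⟩ ∇S(x(t)) − ‖∇S(x(t))‖² ∇(ν²/2)(x(t)). -/

import Mathlib

open Real Set

noncomputable section

/-- Partial derivative of a scalar function on `ℝ^n` in the `k`-th coordinate. -/
def pd (n : ℕ) (k : Fin n) (f : (Fin n → ℝ) → ℝ) (x : Fin n → ℝ) : ℝ :=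
  fderiv ℝ f x (Pi.single k 1)

/-- Gradient on `ℝ^n`. -/
def grad (n : ℕ) (f : (Fin n → ℝ) → ℝ) (x : Fin n → ℝ) : Fin n → ℝ :=
  fun k => pd n k f x

/-- Euclidean inner product on `ℝ^n`. -/
def dot (n : ℕ) (a b : Fin n → ℝ) : ℝ := ∑ i, a i * b i

/-- Squared Euclidean norm on `ℝ^n`. -/
def nsq (n : ℕ) (a : Fin n → ℝ) : ℝ := ∑ i, a i ^ 2

/-!
Along `ẋ = ν ∇S` the chain rule gives `d/dt (ν ∇S)(x) = ν ⟨∇ν, ∇S⟩ ∇S + ν² (Hess S) ∇S`.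
On the other side, the symmetry of the Hessian gives
`∇(½ ν² ‖∇S‖²) = ν ‖∇S‖² ∇ν + ν² (Hess S) ∇S`, and `∇(ν²/2) = ν ∇ν`, so the two correction
terms exactly trade `ν ‖∇S‖² ∇ν` for `ν ⟨∇ν, ∇S⟩ ∇S`.
-/

section Gradient

variable {n : ℕ}

lemma grad_apply (f : (Fin n → ℝ) → ℝ) (y : Fin n → ℝ) (k : Fin n) :
    grad n f y k = pd n k f y := rfl

lemma dot_eq_dotProduct (a b : Fin n → ℝ) : dot n a b = a ⬝ᵥ b := rfl

lemma nsq_eq_dotProduct_self (a : Fin n → ℝ) : nsq n a = a ⬝ᵥ a := by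
  simp only [nsq, dotProduct, sq]

lemma fderiv_apply_eq_grad_dotProduct (f : (Fin n → ℝ) → ℝ) (y w : Fin n → ℝ) :
    fderiv ℝ f y w = grad n f y ⬝ᵥ w := by
  rw [dotProduct_comm]
  conv_lhs => rw [pi_eq_sum_univ' w, map_sum]
  simp [dotProduct, grad, pd]

lemma DifferentiableAt.hasDerivAt_comp_grad {f : (Fin n → ℝ) → ℝ} {x : ℝ → Fin n → ℝ}
    {x' : Fin n → ℝ} {t : ℝ} (hf : DifferentiableAt ℝ f (x t)) (hx : HasDerivAt x x' t) :
    HasDerivAt (fun s => f (x s)) (grad n f (x t) ⬝ᵥ x') t := by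
  rw [← fderiv_apply_eq_grad_dotProduct]
  exact hf.hasFDerivAt.comp_hasDerivAt t hx

lemma pd_mul {f g : (Fin n → ℝ) → ℝ} {y : Fin n → ℝ} (hf : DifferentiableAt ℝ f y)
    (hg : DifferentiableAt ℝ g y) (k : Fin n) :
    pd n k (fun z => f z * g z) y = pd n k f y * g y + f y * pd n k g y := by
  simp only [pd, fderiv_fun_mul hf hg, add_apply, smul_apply, smul_eq_mul]
  ring

lemma HasFDerivAt.sq_div_two {f : (Fin n → ℝ) → ℝ} {f' : (Fin n → ℝ) →L[ℝ] ℝ}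
    {y : Fin n → ℝ} (hf : HasFDerivAt f f' y) :
    HasFDerivAt (fun z => f z ^ 2 / 2) (f y • f') y := by
  have hsq : HasDerivAt (fun u : ℝ => u ^ 2 / 2) (f y) (f y) := by
    simpa using (hasDerivAt_pow 2 (f y)).div_const 2
  exact hsq.comp_hasFDerivAt y hf

lemma grad_sq_div_two {f : (Fin n → ℝ) → ℝ} {y : Fin n → ℝ} (hf : DifferentiableAt ℝ f y) :
    grad n (fun z => f z ^ 2 / 2) y = f y • grad n f y := by
  funext k
  simp only [grad, pd, hf.hasFDerivAt.sq_div_two.fderiv, smul_apply, Pi.smul_apply]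

lemma pd_nsq {g : (Fin n → ℝ) → Fin n → ℝ} {y : Fin n → ℝ}
    (hg : ∀ i, DifferentiableAt ℝ (fun z => g z i) y) (k : Fin n) :
    pd n k (fun z => nsq n (g z)) y = 2 * (g y ⬝ᵥ fun i => pd n k (fun z => g z i) y) := by
  have hsum : (fun z => nsq n (g z)) = fun z => 2 * ∑ i, g z i ^ 2 / 2 := by
    funext z
    simp only [nsq, Finset.mul_sum]
    ring_nf
  have h := ((HasFDerivAt.fun_sum (u := Finset.univ) fun i _ =>
    (hg i).hasFDerivAt.sq_div_two).const_mul 2).fderiv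
  rw [pd, hsum, h]
  simp [dotProduct, pd]

end Gradient

section SecondDerivatives

variable {n : ℕ} {S : (Fin n → ℝ) → ℝ} {y : Fin n → ℝ}

lemma differentiableAt_pd (hS : ContDiffAt ℝ 2 S y) (k : Fin n) :
    DifferentiableAt ℝ (pd n k S) y :=
  ((hS.fderiv_right (m := 1) le_rfl).differentiableAt one_ne_zero).clm_apply
    (differentiableAt_const _)

lemma pd_pd_eq_fderiv_fderiv (hS : ContDiffAt ℝ 2 S y) (i k : Fin n) :
    pd n i (pd n k S) y = fderiv ℝ (fderiv ℝ S) y (Pi.single i 1) (Pi.single k 1) := by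
  have hS' := (hS.fderiv_right (m := 1) le_rfl).differentiableAt one_ne_zero
  rw [pd, show pd n k S = fun z => fderiv ℝ S z (Pi.single k 1) from rfl,
    fderiv_clm_apply hS' (differentiableAt_const _)]
  simp

lemma pd_pd_comm (hS : ContDiffAt ℝ 2 S y) (i k : Fin n) :
    pd n i (pd n k S) y = pd n k (pd n i S) y := by
  rw [pd_pd_eq_fderiv_fderiv hS, pd_pd_eq_fderiv_fderiv hS]
  exact hS.isSymmSndFDerivAt (by simp) _ _

lemma pd_half_sq_mul_nsq_grad {ν : (Fin n → ℝ) → ℝ} (hν : DifferentiableAt ℝ ν y)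
    (hS : ContDiffAt ℝ 2 S y) (k : Fin n) :
    pd n k (fun z => 1 / 2 * ν z ^ 2 * nsq n (grad n S z)) y
      = ν y * pd n k ν y * nsq n (grad n S y)
        + ν y ^ 2 * (grad n (pd n k S) y ⬝ᵥ grad n S y) := by
  have hpdS := differentiableAt_pd hS
  have hsplit : (fun z => 1 / 2 * ν z ^ 2 * nsq n (grad n S z))
      = fun z => ν z ^ 2 / 2 * nsq n (grad n S z) := by
    funext z; ring
  have hnsq : DifferentiableAt ℝ (fun z => nsq n (grad n S z)) y :=
    DifferentiableAt.fun_sum fun i _ => (hpdS i).pow 2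
  have hsymm : (fun i => pd n k (fun z => grad n S z i) y) = grad n (pd n k S) y :=
    funext fun i => pd_pd_comm hS k i
  rw [hsplit, pd_mul (by fun_prop) hnsq, pd_nsq (g := grad n S) hpdS, hsymm,
    ← grad_apply, grad_sq_div_two hν, dotProduct_comm]
  simp only [Pi.smul_apply, smul_eq_mul, grad_apply]
  ring

lemma hasDerivAt_mul_pd_comp {ν : (Fin n → ℝ) → ℝ} {x : ℝ → Fin n → ℝ} {t : ℝ}
    (hν : DifferentiableAt ℝ ν (x t)) (hS : ContDiffAt ℝ 2 S (x t))
    (hx : HasDerivAt x (ν (x t) • grad n S (x t)) t) (k : Fin n) :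
    HasDerivAt (fun s => ν (x s) * pd n k S (x s))
      (ν (x t) * (grad n ν (x t) ⬝ᵥ grad n S (x t)) * pd n k S (x t)
        + ν (x t) ^ 2 * (grad n (pd n k S) (x t) ⬝ᵥ grad n S (x t))) t := by
  refine ((hν.hasDerivAt_comp_grad hx).fun_mul
    ((differentiableAt_pd hS k).hasDerivAt_comp_grad hx)).congr_deriv ?_
  simp only [dotProduct_smul, smul_eq_mul]
  ring

end SecondDerivatives

theorem joukovski_force_identity_general
    (n : ℕ)
    (ν S : (Fin n → ℝ) → ℝ) (hν : ContDiff ℝ 1 ν) (hS : ContDiff ℝ 2 S)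
    (v : (Fin n → ℝ) → (Fin n → ℝ))
    (hv : ∀ x, v x = fun k => ν x * grad n S x k)
    (t₁ t₂ : ℝ) (x : ℝ → (Fin n → ℝ))
    (hx : ∀ t ∈ Ioo t₁ t₂, HasDerivAt x (v (x t)) t) :
    ∀ t ∈ Ioo t₁ t₂,
      HasDerivAt (fun s => v (x s))
        (fun k => grad n (fun y => (1 / 2) * ν y ^ 2 * nsq n (grad n S y)) (x t) k
          + dot n (grad n (fun y => ν y ^ 2 / 2) (x t)) (grad n S (x t)) * grad n S (x t) k
          - nsq n (grad n S (x t)) * grad n (fun y => ν y ^ 2 / 2) (x t) k) t := by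
  intro t ht
  have hνx : DifferentiableAt ℝ ν (x t) := hν.differentiable one_ne_zero _
  have hvx : v (x t) = ν (x t) • grad n S (x t) := hv _
  rw [hasDerivAt_pi]
  intro k
  have hvk : (fun s => v (x s) k) = fun s => ν (x s) * pd n k S (x s) := by
    funext s; rw [hv]; rfl
  rw [hvk]
  refine (hasDerivAt_mul_pd_comp hνx hS.contDiffAt (hvx ▸ hx t ht) k).congr_deriv ?_
  rw [grad_apply, pd_half_sq_mul_nsq_grad hνx hS.contDiffAt, grad_sq_div_two hνx]
  simp only [dot_eq_dotProduct, nsq_eq_dotProduct_self, smul_dotProduct, Pi.smul_apply,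
    smul_eq_mul, grad_apply]
  ring

/-- The force-field identity of the generalized Joukovski proposition: every solution of
`ẋ = ν(x)∇S(x)` satisfies
`ẍ = ∇(½ν²‖∇S‖²) + ⟨∇(ν²/2),∇S⟩∇S − ‖∇S‖²∇(ν²/2)`. -/
theorem joukovski_force_identity
    (n : ℕ) (hn : 1 ≤ n)
    (ν S : (Fin n → ℝ) → ℝ) (hν : ContDiff ℝ 1 ν) (hS : ContDiff ℝ 2 S)
    (v : (Fin n → ℝ) → (Fin n → ℝ))
    (hv : ∀ x, v x = fun k => ν x * grad n S x k)
    (t₁ t₂ : ℝ) (x : ℝ → (Fin n → ℝ))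
    (hx : ∀ t ∈ Ioo t₁ t₂, HasDerivAt x (v (x t)) t) :
    ∀ t ∈ Ioo t₁ t₂,
      HasDerivAt (fun s => v (x s))
        (fun k => grad n (fun y => (1 / 2) * ν y ^ 2 * nsq n (grad n S y)) (x t) k
          + dot n (grad n (fun y => ν y ^ 2 / 2) (x t)) (grad n S (x t)) * grad n S (x t) k
          - nsq n (grad n S (x t)) * grad n (fun y => ν y ^ 2 / 2) (x t) k) t :=
  joukovski_force_identity_general n ν S hν hS v hv t₁ t₂ x hx
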